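/- For integers a < b and functions f, g : ℤ → ℝ, and a function α : ℤ → ℝ with 0 < α(t) ≤ 1 for all t, the following summation-by-parts identity holds: ∑_{t=a+1}^{b-1} f(t) · [ (1/Γ(α(t))) ∑_{s=a+1}^{t} (t-s+1)^{\overline{α(t)-1}} g(s) ] = ∑_{t=a+1}^{b-1} g(t) · [ ∑_{s=t}^{b-1} (s-t+1)^{\overline{α(s)-1}} f(s) / Γ(α(s)) ], where x^{\overline{β}} = Γ(x+β)/Γ(x) denotes the rising factorial. -/

import Mathlib

/-- Generalized rising factorial `x^{\overline{β}} = Γ(x+β)/Γ(x)`. -/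
noncomputable def rise (x β : ℝ) : ℝ := Real.Gamma (x + β) / Real.Gamma x

namespace Finset

@[to_additive]
theorem prod_Icc_prod_Icc_comm {ι M : Type*} [Preorder ι] [LocallyFiniteOrder ι] [CommMonoid M]
    (a b : ι) (F : ι → ι → M) :
    ∏ t ∈ Icc a b, ∏ s ∈ Icc a t, F t s = ∏ s ∈ Icc a b, ∏ t ∈ Icc s b, F t s :=
  prod_comm' fun t s => by
    simp only [mem_Icc]
    exact ⟨fun ⟨⟨_, htb⟩, has, hst⟩ => ⟨⟨hst, htb⟩, has, hst.trans htb⟩,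
      fun ⟨⟨hst, htb⟩, has, _⟩ => ⟨⟨has.trans hst, htb⟩, has, hst⟩⟩

end Finset

theorem sum_by_parts_typeI_left_typeII_right
    (a b : ℤ) (f g : ℤ → ℝ) (α : ℤ → ℝ) :
    ∑ t ∈ Finset.Icc (a + 1) (b - 1), f t *
      ((1 / Real.Gamma (α t)) *
        ∑ s ∈ Finset.Icc (a + 1) t, rise ((t : ℝ) - s + 1) (α t - 1) * g s)
    = ∑ t ∈ Finset.Icc (a + 1) (b - 1), g t *
      (∑ s ∈ Finset.Icc t (b - 1),
        rise ((s : ℝ) - t + 1) (α s - 1) * f s / Real.Gamma (α s)) := by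
  simp only [Finset.mul_sum]
  rw [Finset.sum_Icc_sum_Icc_comm]
  refine Finset.sum_congr rfl fun s _ => Finset.sum_congr rfl fun t _ => ?_
  ring
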